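/- For every Łukasiewicz formula φ ∈ L^Q_Ł, φ is Ł-valid if and only if its probabilistic counterpart φ^Pr is FP-valid. -/
import Mathlib


open scoped Classical

/-- Classical propositional formulas (the language `L_CPL`), built from
propositional variables (indexed by `ℕ`) using ¬, ∧, ∨. -/
inductive CPL where
  | var : ℕ → CPL
  | neg : CPL → CPL
  | and : CPL → CPL → CPL
  | or : CPL → CPL → CPL
deriving DecidableEq

namespace CPL

/-- The set of propositional variables occurring in a formula. -/
def vars : CPL → Finset ℕ
  | var p => {p}
  | neg φ => vars φ
  | and φ χ => vars φ ∪ vars χ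
  | or φ χ => vars φ ∪ vars χ

/-- Classical evaluation of a formula under a Boolean valuation. -/
def eval (v : ℕ → Bool) : CPL → Bool
  | var p => v p
  | neg φ => !eval v φ
  | and φ χ => eval v φ && eval v χ
  | or φ χ => eval v φ || eval v χ

/-- Evaluation of a formula at a state given as a set of variables:
the variables in `X` are true, all others false. -/
def evalSet (X : Finset ℕ) (φ : CPL) : Bool := eval (fun p => decide (p ∈ X)) φ

/-- CPL-satisfiability. -/
def Satisfiable (φ : CPL) : Prop := ∃ v, eval v φ = true

/-- CPL-validity. -/
def Valid (φ : CPL) : Prop := ∀ v, eval v φ = true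

/-- Classical entailment `φ ⊨_CPL χ`. -/
def Entails (φ χ : CPL) : Prop := ∀ v, eval v φ = true → eval v χ = true

/-- A literal: a variable or a negated variable. -/
def IsLiteral (φ : CPL) : Prop := (∃ p, φ = var p) ∨ ∃ p, φ = neg (var p)

/-- An `L_CPL`-term: a conjunction of literals. -/
inductive IsTerm : CPL → Prop
  | lit {φ} : IsLiteral φ → IsTerm φ
  | conj {φ χ} : IsTerm φ → IsTerm χ → IsTerm (and φ χ)

/-- A conjunction of propositional variables. -/
inductive IsConjVars : CPL → Prop
  | var (p : ℕ) : IsConjVars (var p)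
  | conj {φ χ} : IsConjVars φ → IsConjVars χ → IsConjVars (and φ χ)

/-- A disjunction of propositional variables. -/
inductive IsDisjVars : CPL → Prop
  | var (p : ℕ) : IsDisjVars (var p)
  | disj {φ χ} : IsDisjVars φ → IsDisjVars χ → IsDisjVars (or φ χ)

/-- Variables occurring as positive literals (in a term). -/
def posVars : CPL → Finset ℕ
  | var p => {p}
  | neg _ => ∅
  | and φ χ => posVars φ ∪ posVars χ
  | or _ _ => ∅

/-- Variables occurring as negated literals (in a term). -/
def negVars : CPL → Finset ℕ
  | var _ => ∅
  | neg (var p) => {p}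
  | neg _ => ∅
  | and φ χ => negVars φ ∪ negVars χ
  | or _ _ => ∅

/-- The literals occurring in a term. -/
def lits (φ : CPL) : Finset CPL :=
  (posVars φ).image var ∪ (negVars φ).image (fun p => neg (var p))

end CPL

/-- A state (possible world) over a finite set `V` of variables: a subset of `V`. -/
abbrev World (V : Finset ℕ) := {X : Finset ℕ // X ⊆ V}

/-- A probabilistic model for `V`: a finitely additive probability measure
`μ : 2^(2^V) → [0,1]`. -/
structure ProbModel (V : Finset ℕ) where
  μ : Set (World V) → ℝ
  nonneg : ∀ A, 0 ≤ μ A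
  le_one : ∀ A, μ A ≤ 1
  m_univ : μ Set.univ = 1
  m_empty : μ ∅ = 0
  m_add : ∀ A B : Set (World V), Disjoint A B → μ (A ∪ B) = μ A + μ B

/-- The truth set `‖φ‖_M` of a classical formula in a probabilistic model for `V`. -/
def truthSet (V : Finset ℕ) (φ : CPL) : Set (World V) :=
  {w | CPL.evalSet w.1 φ = true}

/-- Comparison symbols ◇ ∈ {≤, <, >, ≥}. -/
inductive Ineq where
  | le | lt | gt | ge
deriving DecidableEq

/-- The relation denoted by a comparison symbol. -/
def Ineq.holds : Ineq → ℝ → ℝ → Prop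
  | le, x, c => x ≤ c
  | lt, x, c => x < c
  | gt, x, c => x > c
  | ge, x, c => x ≥ c

/-- Formulas of the probabilistic language `L^Q_Pr`, built from probabilistic atoms
`Pr(φ)` and `Pr(φ)◇c̄` using ¬, △, ⊙, ⊕, →. -/
inductive FP where
  | prob : CPL → FP
  | probIneq : CPL → Ineq → ℚ → FP
  | neg : FP → FP
  | delta : FP → FP
  | conj : FP → FP → FP
  | disj : FP → FP → FP
  | impl : FP → FP → FP
deriving DecidableEq

namespace FP

/-- Well-formedness: all rational constants lie in `[0,1] ∩ ℚ`. -/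
def WF : FP → Prop
  | prob _ => True
  | probIneq _ _ c => 0 ≤ c ∧ c ≤ 1
  | neg α => WF α
  | delta α => WF α
  | conj α β => WF α ∧ WF β
  | disj α β => WF α ∧ WF β
  | impl α β => WF α ∧ WF β

/-- The variables of an `L^Q_Pr`-formula. -/
def vars : FP → Finset ℕ
  | prob φ => φ.vars
  | probIneq φ _ _ => φ.vars
  | neg α => vars α
  | delta α => vars α
  | conj α β => vars α ∪ vars β
  | disj α β => vars α ∪ vars β
  | impl α β => vars α ∪ vars β

/-- The events `E(α)`: the classical formulas occurring in probabilistic atoms of `α`. -/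
def events : FP → Finset CPL
  | prob φ => {φ}
  | probIneq φ _ _ => {φ}
  | neg α => events α
  | delta α => events α
  | conj α β => events α ∪ events β
  | disj α β => events α ∪ events β
  | impl α β => events α ∪ events β

/-- The FP-interpretation `I_M` induced by a probabilistic model `M`. -/
noncomputable def interp {V : Finset ℕ} (M : ProbModel V) : FP → ℝ
  | prob φ => M.μ (truthSet V φ)
  | probIneq φ d c => if d.holds (M.μ (truthSet V φ)) (c : ℝ) then 1 else 0
  | neg α => 1 - interp M α
  | delta α => if interp M α = 1 then 1 else 0
  | conj α β => max 0 (interp M α + interp M β - 1)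
  | disj α β => min 1 (interp M α + interp M β)
  | impl α β => min 1 (1 - interp M α + interp M β)

/-- `α` is FP-satisfiable: `I_M(α) = 1` in some probabilistic model for `Var(α)`. -/
def Satisfiable (α : FP) : Prop := ∃ M : ProbModel α.vars, interp M α = 1

/-- `α` is FP-valid: `I_M(α) = 1` in every probabilistic model for `Var(α)`. -/
def Valid (α : FP) : Prop := ∀ M : ProbModel α.vars, interp M α = 1

/-- `α ⊨_FP β`: `I_M(β) = 1` in every probabilistic model for the variables of
`{α, β}` with `I_M(α) = 1`. -/
def Entails1 (α β : FP) : Prop :=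
  ∀ M : ProbModel (α.vars ∪ β.vars), interp M α = 1 → interp M β = 1

/-- The variables of a finite set of `L^Q_Pr`-formulas. -/
def varsSet (Γ : Finset FP) : Finset ℕ := Γ.sup vars

/-- A finite set `Γ` is FP-satisfiable (`Γ ⊭_FP ⊥`): some probabilistic model for
the variables of `Γ` makes every member of `Γ` equal to `1`. -/
def SetSatisfiable (Γ : Finset FP) : Prop :=
  ∃ M : ProbModel (varsSet Γ), ∀ γ ∈ Γ, interp M γ = 1

/-- `Γ ⊨_FP δ`: every probabilistic model for the variables of `Γ ∪ {δ}` satisfying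
all of `Γ` satisfies `δ`. -/
def EntailsFin (Γ : Finset FP) (δ : FP) : Prop :=
  ∀ M : ProbModel (varsSet Γ ∪ δ.vars), (∀ γ ∈ Γ, interp M γ = 1) → interp M δ = 1

/-- `Γ ⊨^cons_FP δ`: `Γ ⊨_FP δ` and `Γ ⊭_FP ⊥`. -/
def ConsEntails (Γ : Finset FP) (δ : FP) : Prop :=
  EntailsFin Γ δ ∧ SetSatisfiable Γ

/-- The set of permitted values `V_Pr(Pr(φ)◇c̄)`. -/
def permittedValues (φ : CPL) (d : Ineq) (c : ℚ) : Set ℝ :=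
  {x | ∃ (V : Finset ℕ) (M : ProbModel V), φ.vars ⊆ V ∧
      interp M (probIneq φ d c) = 1 ∧ M.μ (truthSet V φ) = x}

end FP

/-- Formulas of the Łukasiewicz language `L^Q_Ł`, built from propositional variables
and truth-constant literals `p◇c̄` using ¬, △, ⊙, ⊕, →. -/
inductive Luk where
  | var : ℕ → Luk
  | ineq : ℕ → Ineq → ℚ → Luk
  | neg : Luk → Luk
  | delta : Luk → Luk
  | conj : Luk → Luk → Luk
  | disj : Luk → Luk → Luk
  | impl : Luk → Luk → Luk
deriving DecidableEq

/-- An Ł-valuation: a function `Var → [0,1]`. -/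
structure LukVal where
  v : ℕ → ℝ
  mem : ∀ p, v p ∈ Set.Icc (0 : ℝ) 1

/-- Extension of an Ł-valuation to all `L^Q_Ł`-formulas. -/
noncomputable def LukVal.eval (val : LukVal) : Luk → ℝ
  | .var p => val.v p
  | .ineq p d c => if d.holds (val.v p) (c : ℝ) then 1 else 0
  | .neg φ => 1 - val.eval φ
  | .delta φ => if val.eval φ = 1 then 1 else 0
  | .conj φ χ => max 0 (val.eval φ + val.eval χ - 1)
  | .disj φ χ => min 1 (val.eval φ + val.eval χ)
  | .impl φ χ => min 1 (1 - val.eval φ + val.eval χ)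

namespace Luk

/-- Well-formedness: all rational constants lie in `[0,1] ∩ ℚ`. -/
def WF : Luk → Prop
  | var _ => True
  | ineq _ _ c => 0 ≤ c ∧ c ≤ 1
  | neg φ => WF φ
  | delta φ => WF φ
  | conj φ χ => WF φ ∧ WF χ
  | disj φ χ => WF φ ∧ WF χ
  | impl φ χ => WF φ ∧ WF χ

/-- `Φ ⊨_Ł χ` for a finite set `Φ`. -/
def EntailsFin (Φ : Finset Luk) (χ : Luk) : Prop :=
  ∀ val : LukVal, (∀ φ ∈ Φ, val.eval φ = 1) → val.eval χ = 1

/-- `φ` is Ł-valid. -/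
def ValidL (φ : Luk) : Prop := ∀ val : LukVal, val.eval φ = 1

/-- A set of `L^Q_Ł`-formulas is Ł-satisfiable. -/
def SatisfiableSet (S : Set Luk) : Prop := ∃ val : LukVal, ∀ φ ∈ S, val.eval φ = 1

/-- The probabilistic counterpart `φ^Pr` of a Łukasiewicz formula. -/
def toFP : Luk → FP
  | var p => .prob (.var p)
  | ineq p d c => .probIneq (.var p) d c
  | neg φ => .neg (toFP φ)
  | delta φ => .delta (toFP φ)
  | conj φ χ => .conj (toFP φ) (toFP χ)
  | disj φ χ => .disj (toFP φ) (toFP χ)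
  | impl φ χ => .impl (toFP φ) (toFP χ)

end Luk

namespace FP

/-- The outer counterpart `α^↑` of an `L^Q_Pr`-formula, replacing each atom `Pr(φ)`
by the fresh variable `e φ` (and `Pr(φ)◇c̄` by `(e φ)◇c̄`). -/
def outer (e : CPL → ℕ) : FP → Luk
  | prob φ => .var (e φ)
  | probIneq φ d c => .ineq (e φ) d c
  | neg α => .neg (outer e α)
  | delta α => .delta (outer e α)
  | conj α β => .conj (outer e α) (outer e β)
  | disj α β => .disj (outer e α) (outer e β)
  | impl α β => .impl (outer e α) (outer e β)

end FP

/-- The ⊙-conjunction of a (nonempty) list of `L^Q_Pr`-formulas. -/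
def bigConjFP : List FP → FP
  | [] => .probIneq (.var 0) .ge 0
  | a :: t => t.foldl .conj a

/-- The ∨-disjunction of a (nonempty) list of classical formulas. -/
def bigDisjCPL : List CPL → CPL
  | [] => .var 0
  | a :: t => t.foldl .or a

/-- The PIT `⊙_i Pr(τ_i)≤c̄_i ⊙ ⊙_i Pr(τ_i)≥c̄_i` associated with the list of
pairs `(τ_i, c_i)`. -/
def completePITFormula (L : List (CPL × ℚ)) : FP :=
  bigConjFP (L.map (fun t => FP.probIneq t.1 .le t.2) ++
             L.map (fun t => FP.probIneq t.1 .ge t.2))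

/-- `τ` is an `L_CPL`-term containing, for every `p ∈ V`, exactly one of the
literals `p` and `¬p` (and no other variables). -/
def IsCompleteTermOver (V : Finset ℕ) (τ : CPL) : Prop :=
  CPL.IsTerm τ ∧ τ.vars ⊆ V ∧ ∀ p ∈ V, (p ∈ τ.posVars ↔ p ∉ τ.negVars)

/-- Membership in `𝒱 = {0, 1/n, …, (n−1)/n, 1}`. -/
def memVSet (n : ℕ) (c : ℚ) : Prop := ∃ k : ℕ, k ≤ n ∧ c = (k : ℚ) / (n : ℚ)

/-- The data `(τ_i, c_i)` of a `⟨V,𝒱⟩`-complete PIT (with `𝒱` given by `n`). -/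
def IsCompletePIT (V : Finset ℕ) (n : ℕ) (L : List (CPL × ℚ)) : Prop :=
  (L.map Prod.fst).Nodup ∧
  (∀ t ∈ L, IsCompleteTermOver V t.1 ∧ memVSet n t.2) ∧
  (L.map Prod.snd).sum = 1

/-- A measure is coherent with a value assignment `pr` on the events `E`. -/
def coherent {V : Finset ℕ} (M : ProbModel V) (E : Finset CPL) (pr : CPL → ℚ) : Prop :=
  ∀ ψ ∈ E, M.μ (truthSet V ψ) = (pr ψ : ℝ)

/-- Conditional probability `Pr_μ(φ | χ) = μ(‖φ∧χ‖)/μ(‖χ‖)`. -/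
noncomputable def condProb {V : Finset ℕ} (M : ProbModel V) (φ χ : CPL) : ℝ :=
  M.μ (truthSet V (CPL.and φ χ)) / M.μ (truthSet V χ)

/-- `τ` is a solution to the PrAP `⟨{φ}, χ, H, E, pr⟩`: an `L_CPL`-term composed of
literals from `H` s.t. `φ, τ ⊨_CPL χ` and some probabilistic model coherent with `pr`
gives `μ(‖φ∧τ‖) > 0`. -/
def IsPrAPSolution (φ χ : CPL) (H E : Finset CPL) (pr : CPL → ℚ) (τ : CPL) : Prop :=
  CPL.IsTerm τ ∧ τ.lits ⊆ H ∧
  (∀ v, CPL.eval v φ = true → CPL.eval v τ = true → CPL.eval v χ = true) ∧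
  ∃ M : ProbModel (φ.vars ∪ χ.vars),
    coherent M E pr ∧ 0 < M.μ (truthSet (φ.vars ∪ χ.vars) (CPL.and φ τ))

/-- `τ` is a preferred solution: a solution s.t. for every other solution `σ` there is
a probabilistic model coherent with `pr` with `μ(‖τ‖) ≥ μ(‖σ‖)`. -/
def IsPreferredPrAPSolution (φ χ : CPL) (H E : Finset CPL) (pr : CPL → ℚ) (τ : CPL) : Prop :=
  IsPrAPSolution φ χ H E pr τ ∧
  ∀ σ, IsPrAPSolution φ χ H E pr σ → σ ≠ τ →
    ∃ M : ProbModel (φ.vars ∪ χ.vars),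
      coherent M E pr ∧
      M.μ (truthSet (φ.vars ∪ χ.vars) σ) ≤ M.μ (truthSet (φ.vars ∪ χ.vars) τ)

/-- The FP-counterpart `Ξ_p = {Pr(ψ)≈c̄ : ψ ∈ E, p(ψ) = c}` of a value assignment,
where `Pr(ψ)≈c̄` abbreviates `(Pr(ψ)≥c̄) ⊙ (Pr(ψ)≤c̄)`. -/
def XiP (E : Finset CPL) (pr : CPL → ℚ) : Finset FP :=
  E.image (fun ψ => FP.conj (FP.probIneq ψ .ge (pr ψ)) (FP.probIneq ψ .le (pr ψ)))

/-- The next weakest PIL `λ^♭_𝒱` of the PIL `Pr(τ)◇(k/n)`. -/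
def flatPIL (n : ℕ) (τ : CPL) (d : Ineq) (k : ℕ) : FP :=
  match d with
  | .ge => FP.probIneq τ .gt (((k : ℚ) - 1) / (n : ℚ))
  | .gt => FP.probIneq τ .ge ((k : ℚ) / (n : ℚ))
  | .le => FP.probIneq τ .lt (((k : ℚ) + 1) / (n : ℚ))
  | .lt => FP.probIneq τ .le ((k : ℚ) / (n : ℚ))

/-- The theory `Ψ_Γ = Γ^↑ ∪ {p_φ → p_χ : φ, χ ∈ E[Γ], φ ⊨_CPL χ}`. -/
def PsiGamma (Γ : Finset FP) (e : CPL → ℕ) : Set Luk :=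
  (fun α => FP.outer e α) '' (↑Γ : Set FP) ∪
  {ψ | ∃ φ ∈ Γ.sup FP.events, ∃ χ ∈ Γ.sup FP.events,
        CPL.Entails φ χ ∧ ψ = Luk.impl (.var (e φ)) (.var (e χ))}

/-- The conjunction `hd ∧ ⋀_{q ∈ s} q`. -/
def conjVarsFrom (hd : CPL) (s : Finset ℕ) : CPL :=
  (s.sort (· ≤ ·)).foldl (fun acc q => CPL.and acc (CPL.var q)) hd
namespace Stmt1Aux

/-- Product-measure weight of a world `X` over variable set `V`. -/
noncomputable def wt (V : Finset ℕ) (v : ℕ → ℝ) (X : Finset ℕ) : ℝ :=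
  (∏ p ∈ X, v p) * ∏ p ∈ V \ X, (1 - v p)

lemma wt_nonneg (V : Finset ℕ) (v : ℕ → ℝ) (hv : ∀ p, 0 ≤ v p ∧ v p ≤ 1) (X : Finset ℕ) :
    0 ≤ wt V v X := by
  apply mul_nonneg
  · exact Finset.prod_nonneg fun p _ => (hv p).1
  · exact Finset.prod_nonneg fun p _ => by linarith [(hv p).2]

lemma sum_wt (V : Finset ℕ) (v : ℕ → ℝ) : ∑ X ∈ V.powerset, wt V v X = 1 := by
  have h : ∑ X ∈ V.powerset, wt V v X = ∏ p ∈ V, (v p + (1 - v p)) := by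
    rw [Finset.prod_add]; rfl
  rw [h]
  simp

lemma sum_wt_filter (V : Finset ℕ) (v : ℕ → ℝ) (p : ℕ) (hp : p ∈ V) :
    ∑ X ∈ V.powerset.filter (fun X => p ∈ X), wt V v X = v p := by
  have key : ∑ X ∈ V.powerset.filter (fun X => p ∈ X), wt V v X
      = ∑ Y ∈ (V.erase p).powerset, v p * wt (V.erase p) v Y := by
    refine Finset.sum_bij' (fun X _ => X.erase p) (fun Y _ => insert p Y)
      ?_ ?_ ?_ ?_ ?_
    · intro X hX
      simp only [Finset.mem_filter, Finset.mem_powerset] at hX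
      simp only [Finset.mem_powerset]
      exact fun q hq => Finset.mem_erase.mpr
        ⟨(Finset.mem_erase.mp hq).1, hX.1 (Finset.mem_erase.mp hq).2⟩
    · intro Y hY
      simp only [Finset.mem_powerset] at hY
      simp only [Finset.mem_filter, Finset.mem_powerset]
      constructor
      · intro q hq
        rcases Finset.mem_insert.mp hq with h | h
        · exact h ▸ hp
        · exact Finset.mem_of_mem_erase (hY h)
      · exact Finset.mem_insert_self p Y
    · intro X hX
      simp only [Finset.mem_filter, Finset.mem_powerset] at hX
      exact Finset.insert_erase hX.2
    · intro Y hY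
      simp only [Finset.mem_powerset] at hY
      exact Finset.erase_insert (fun hpY => (Finset.mem_erase.mp (hY hpY)).1 rfl)
    · intro X hX
      simp only [Finset.mem_filter, Finset.mem_powerset] at hX
      obtain ⟨hXV, hpX⟩ := hX
      have hprod : ∏ q ∈ X, v q = v p * ∏ q ∈ X.erase p, v q :=
        (Finset.mul_prod_erase X v hpX).symm
      have hsd : V \ X = (V.erase p) \ (X.erase p) := by
        ext q
        simp only [Finset.mem_sdiff, Finset.mem_erase]
        constructor
        · rintro ⟨hqV, hqX⟩
          exact ⟨⟨fun h => hqX (h ▸ hpX), hqV⟩, fun h => hqX h.2⟩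
        · rintro ⟨⟨hqp, hqV⟩, h⟩
          exact ⟨hqV, fun hh => h ⟨hqp, hh⟩⟩
      unfold wt
      rw [hprod, hsd, mul_assoc]
  rw [key, ← Finset.mul_sum, sum_wt, mul_one]

/-- The product probabilistic model realizing the marginals `v`. -/
noncomputable def prodModel (V : Finset ℕ) (v : ℕ → ℝ) (hv : ∀ p, 0 ≤ v p ∧ v p ≤ 1) :
    ProbModel V where
  μ A := ∑ X ∈ V.powerset, if X ∈ Subtype.val '' A then wt V v X else 0
  nonneg A := Finset.sum_nonneg fun X _ => by
    split
    · exact wt_nonneg V v hv X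
    · exact le_rfl
  le_one A := by
    calc (∑ X ∈ V.powerset, if X ∈ Subtype.val '' A then wt V v X else 0)
        ≤ ∑ X ∈ V.powerset, wt V v X := by
          apply Finset.sum_le_sum
          intro X _
          split
          · exact le_rfl
          · exact wt_nonneg V v hv X
      _ = 1 := sum_wt V v
  m_univ := by
    show (∑ X ∈ V.powerset,
      if X ∈ Subtype.val '' (Set.univ : Set (World V)) then wt V v X else 0) = 1
    have h : ∀ X ∈ V.powerset,
        (if X ∈ Subtype.val '' (Set.univ : Set (World V)) then wt V v X else 0) = wt V v X := by
      intro X hX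
      rw [if_pos ⟨⟨X, Finset.mem_powerset.mp hX⟩, Set.mem_univ _, rfl⟩]
    rw [Finset.sum_congr rfl h, sum_wt]
  m_empty := by simp
  m_add A B hAB := by
    rw [← Finset.sum_add_distrib]
    apply Finset.sum_congr rfl
    intro X _
    by_cases hA : X ∈ Subtype.val '' A
    · have hB : X ∉ Subtype.val '' B := by
        rintro ⟨b, hbB, rfl⟩
        obtain ⟨a, haA, ha⟩ := hA
        have hab : a = b := Subtype.ext ha
        exact (Set.disjoint_left.mp hAB haA) (hab ▸ hbB)
      have hU : X ∈ Subtype.val '' (A ∪ B) := by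
        rw [Set.image_union]; exact Or.inl hA
      simp [hA, hB, hU]
    · by_cases hB : X ∈ Subtype.val '' B
      · have hU : X ∈ Subtype.val '' (A ∪ B) := by
          rw [Set.image_union]; exact Or.inr hB
        simp [hA, hB, hU]
      · have hU : X ∉ Subtype.val '' (A ∪ B) := by
          rw [Set.image_union]; rintro (h | h) <;> tauto
        simp [hA, hB, hU]

lemma prodModel_var (V : Finset ℕ) (v : ℕ → ℝ) (hv : ∀ p, 0 ≤ v p ∧ v p ≤ 1)
    (p : ℕ) (hp : p ∈ V) :
    (prodModel V v hv).μ (truthSet V (CPL.var p)) = v p := by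
  have key : ∀ X ∈ V.powerset,
      (if X ∈ Subtype.val '' truthSet V (CPL.var p) then wt V v X else 0)
        = if p ∈ X then wt V v X else 0 := by
    intro X hX
    congr 1
    simp only [eq_iff_iff]
    constructor
    · rintro ⟨w, hw, rfl⟩
      simpa [truthSet, CPL.evalSet, CPL.eval] using hw
    · intro hpX
      exact ⟨⟨X, Finset.mem_powerset.mp hX⟩, by simp [truthSet, CPL.evalSet, CPL.eval, hpX], rfl⟩
  show (∑ X ∈ V.powerset, if X ∈ Subtype.val '' truthSet V (CPL.var p) then wt V v X else 0) = v p
  rw [Finset.sum_congr rfl key, ← Finset.sum_filter, sum_wt_filter V v p hp]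

lemma interp_eq {V : Finset ℕ} (M : ProbModel V) (val : LukVal) :
    ∀ χ : Luk, (∀ p ∈ (Luk.toFP χ).vars, M.μ (truthSet V (CPL.var p)) = val.v p) →
      FP.interp M (Luk.toFP χ) = val.eval χ := by
  intro χ
  induction χ with
  | var p =>
    intro h
    have := h p (by simp [Luk.toFP, FP.vars, CPL.vars])
    simp [Luk.toFP, FP.interp, LukVal.eval, this]
  | ineq p d c =>
    intro h
    have := h p (by simp [Luk.toFP, FP.vars, CPL.vars])
    simp [Luk.toFP, FP.interp, LukVal.eval, this]
  | neg χ ih =>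
    intro h
    simp only [Luk.toFP, FP.interp, LukVal.eval]
    rw [ih (fun p hp => h p (by simpa [Luk.toFP, FP.vars] using hp))]
  | delta χ ih =>
    intro h
    simp only [Luk.toFP, FP.interp, LukVal.eval]
    rw [ih (fun p hp => h p (by simpa [Luk.toFP, FP.vars] using hp))]
  | conj χ ψ ih1 ih2 =>
    intro h
    simp only [Luk.toFP, FP.interp, LukVal.eval]
    rw [ih1 (fun p hp => h p (by simp [Luk.toFP, FP.vars]; exact Or.inl (by simpa using hp))),
        ih2 (fun p hp => h p (by simp [Luk.toFP, FP.vars]; exact Or.inr (by simpa using hp)))]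
  | disj χ ψ ih1 ih2 =>
    intro h
    simp only [Luk.toFP, FP.interp, LukVal.eval]
    rw [ih1 (fun p hp => h p (by simp [Luk.toFP, FP.vars]; exact Or.inl (by simpa using hp))),
        ih2 (fun p hp => h p (by simp [Luk.toFP, FP.vars]; exact Or.inr (by simpa using hp)))]
  | impl χ ψ ih1 ih2 =>
    intro h
    simp only [Luk.toFP, FP.interp, LukVal.eval]
    rw [ih1 (fun p hp => h p (by simp [Luk.toFP, FP.vars]; exact Or.inl (by simpa using hp))),
        ih2 (fun p hp => h p (by simp [Luk.toFP, FP.vars]; exact Or.inr (by simpa using hp)))]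

end Stmt1Aux

/-- For every Łukasiewicz formula `φ ∈ L^Q_Ł`, `φ` is Ł-valid iff its
probabilistic counterpart `φ^Pr` is FP-valid. -/
theorem stmt1 (φ : Luk) (h : φ.WF) : Luk.ValidL φ ↔ FP.Valid (Luk.toFP φ) := by
  constructor
  · intro hval M
    let val : LukVal :=
      ⟨fun p => M.μ (truthSet _ (CPL.var p)),
       fun p => Set.mem_Icc.mpr ⟨M.nonneg _, M.le_one _⟩⟩
    rw [Stmt1Aux.interp_eq M val φ (fun p _ => rfl)]
    exact hval val
  · intro hval val
    have hv : ∀ p, 0 ≤ val.v p ∧ val.v p ≤ 1 := fun p => Set.mem_Icc.mp (val.mem p)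
    let M := Stmt1Aux.prodModel (Luk.toFP φ).vars val.v hv
    rw [← Stmt1Aux.interp_eq M val φ
      (fun p hp => Stmt1Aux.prodModel_var (Luk.toFP φ).vars val.v hv p hp)]
    exact hval M
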